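/- arXiv:2506.12765 — 2 statements merged into one kernel-verified Lean document; each statement's English description precedes it below -/
import Mathlib

section
/- Assume additionally (Monotonicity) W1 ≥ W0 P-almost surely. Then for every y ∈ ℝ, the intent-to-treat effect on the distributional outcome 1{Y ≤ y} equals the complier contribution: E[1{Y ≤ y} | Z = 1] − E[1{Y ≤ y} | Z = 0] = E[(1{Y1 ≤ y} − 1{Y0 ≤ y})·1_C]. -/
/-!
On the event `{Z = z}` the outcome `h Y` equals `h (Y(W_z))` with `Y(w) = w Y₁ + (1 - w) Y₀`, a
function of `(Y₀, Y₁, W₀, W₁)`, which is independent of `Z`; so the conditional mean given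
`Z = z` is the plain mean of `h (Y(W_z))`. The intent-to-treat effect is thus
`E[h (Y(W₁)) - h (Y(W₀))]`, and for binary `W₀ ≤ W₁` this integrand vanishes off the compliers
`{W₀ < W₁}`, where it is `h Y₁ - h Y₀`.
-/

open MeasureTheory ProbabilityTheory

/-- Conditional mean given an event: `E[U | A] := E[U · 1_A] / P(A)`. -/
noncomputable def condMean {Ω : Type*} [MeasurableSpace Ω] (P : Measure Ω)
    (U : Ω → ℝ) (A : Set Ω) : ℝ :=
  (∫ ω in A, U ω ∂P) / (P A).toReal

section Independence

variable {Ω α : Type*} [MeasurableSpace Ω] [MeasurableSpace α] {μ : Measure Ω}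
  {X : Ω → α} {U : Ω → ℝ} {s : Set α}

lemma setIntegral_preimage_eq_measureReal_mul_integral (hXU : IndepFun X U μ)
    (hX : Measurable X) (hU : AEStronglyMeasurable U μ) (hs : MeasurableSet s) :
    ∫ ω in X ⁻¹' s, U ω ∂μ = μ.real (X ⁻¹' s) * ∫ ω, U ω ∂μ := by
  have hind : IndepFun ((X ⁻¹' s).indicator (1 : Ω → ℝ)) U μ :=
    hXU.comp (measurable_one.indicator hs) measurable_id
  calc ∫ ω in X ⁻¹' s, U ω ∂μ = ∫ ω, (X ⁻¹' s).indicator 1 ω * U ω ∂μ := by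
        rw [← integral_indicator (hX hs)]
        congr 1 with ω
        simp_rw [← Set.indicator_mul_left, Pi.one_apply, one_mul]
    _ = μ.real (X ⁻¹' s) * ∫ ω, U ω ∂μ := by
        rw [hind.integral_fun_mul_eq_mul_integral
          (measurable_one.indicator (hX hs)).aestronglyMeasurable hU,
          integral_indicator_one (hX hs)]

lemma condMean_preimage_eq_integral [IsFiniteMeasure μ] (hXU : IndepFun X U μ)
    (hX : Measurable X) (hU : AEStronglyMeasurable U μ) (hs : MeasurableSet s)
    (hμs : μ (X ⁻¹' s) ≠ 0) :
    condMean μ U (X ⁻¹' s) = ∫ ω, U ω ∂μ := by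
  rw [condMean, setIntegral_preimage_eq_measureReal_mul_integral hXU hX hU hs, measureReal_def,
    mul_div_cancel_left₀ _ (ENNReal.toReal_ne_zero.2 ⟨hμs, measure_ne_top μ _⟩)]

lemma condMean_congr {U U' : Ω → ℝ} {A : Set Ω} (hA : MeasurableSet A) (h : Set.EqOn U U' A) :
    condMean μ U A = condMean μ U' A := by
  rw [condMean, condMean, setIntegral_congr_fun hA h]

lemma condMean_eq_integral_of_eqOn_comp {β : Type*} [MeasurableSpace β] [IsFiniteMeasure μ]
    {V : Ω → β} {f : β → ℝ} (hXV : IndepFun X V μ) (hX : Measurable X) (hV : Measurable V)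
    (hf : Measurable f) (hs : MeasurableSet s) (hμs : μ (X ⁻¹' s) ≠ 0)
    (hU : Set.EqOn U (f ∘ V) (X ⁻¹' s)) :
    condMean μ U (X ⁻¹' s) = ∫ ω, f (V ω) ∂μ := by
  rw [condMean_congr (hX hs) hU]
  exact condMean_preimage_eq_integral (hXV.comp measurable_id hf) hX
    (hf.comp hV).aestronglyMeasurable hs hμs

end Independence

lemma apply_mix_sub_apply_mix (h : ℝ → ℝ) {w₀ w₁ : ℝ} (hw₀ : w₀ = 0 ∨ w₀ = 1)
    (hw₁ : w₁ = 0 ∨ w₁ = 1) (hle : w₀ ≤ w₁) (a b : ℝ) :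
    h (w₁ * b + (1 - w₁) * a) - h (w₀ * b + (1 - w₀) * a) = if w₀ < w₁ then h b - h a else 0 := by
  rcases hw₀ with rfl | rfl <;> rcases hw₁ with rfl | rfl <;> norm_num at *

section InstrumentalVariables

variable {Ω : Type*} [MeasurableSpace Ω] {P : Measure Ω} {h : ℝ → ℝ} {Y₀ Y₁ : Ω → ℝ}

lemma integrable_comp_mix {W : Ω → ℝ} (hW : ∀ ω, W ω = 0 ∨ W ω = 1)
    (hmeas : AEStronglyMeasurable (fun ω => h (W ω * Y₁ ω + (1 - W ω) * Y₀ ω)) P)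
    (hi₀ : Integrable (fun ω => h (Y₀ ω)) P) (hi₁ : Integrable (fun ω => h (Y₁ ω)) P) :
    Integrable (fun ω => h (W ω * Y₁ ω + (1 - W ω) * Y₀ ω)) P :=
  (hi₀.norm.add hi₁.norm).mono' hmeas <| ae_of_all _ fun ω => by
    rcases hW ω with hω | hω <;> simp [hω]

theorem condMean_sub_condMean_eq_setIntegral_compliers [IsProbabilityMeasure P]
    {Z W₀ W₁ W Y : Ω → ℝ} (hZ : Measurable Z) (hW₀ : Measurable W₀) (hW₁ : Measurable W₁)
    (hY₀ : Measurable Y₀) (hY₁ : Measurable Y₁) (hh : Measurable h)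
    (hZbin : ∀ ω, Z ω = 0 ∨ Z ω = 1) (hW₀bin : ∀ ω, W₀ ω = 0 ∨ W₀ ω = 1)
    (hW₁bin : ∀ ω, W₁ ω = 0 ∨ W₁ ω = 1)
    (hW : ∀ ω, W ω = Z ω * W₁ ω + (1 - Z ω) * W₀ ω)
    (hY : ∀ ω, Y ω = W ω * Y₁ ω + (1 - W ω) * Y₀ ω)
    (hindep : IndepFun Z (fun ω => (Y₀ ω, Y₁ ω, W₀ ω, W₁ ω)) P)
    (hP₁pos : 0 < P {ω | Z ω = 1}) (hP₁lt : P {ω | Z ω = 1} < 1)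
    (hmono : ∀ᵐ ω ∂P, W₀ ω ≤ W₁ ω)
    (hi₀ : Integrable (fun ω => h (Y₀ ω)) P) (hi₁ : Integrable (fun ω => h (Y₁ ω)) P) :
    condMean P (fun ω => h (Y ω)) {ω | Z ω = 1} - condMean P (fun ω => h (Y ω)) {ω | Z ω = 0}
      = ∫ ω in {ω | W₀ ω < W₁ ω}, h (Y₁ ω) - h (Y₀ ω) ∂P := by
  have hV : Measurable fun ω => (Y₀ ω, Y₁ ω, W₀ ω, W₁ ω) := by fun_prop
  have hP₀ : P {ω | Z ω = 0} ≠ 0 := by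
    have hcompl : {ω | Z ω = 0} = {ω | Z ω = 1}ᶜ := by
      ext ω; rcases hZbin ω with hω | hω <;> simp [hω]
    rw [hcompl, Ne, prob_compl_eq_zero_iff (s := {ω | Z ω = 1}) (hZ (measurableSet_singleton 1))]
    exact hP₁lt.ne
  have arm₁ : condMean P (fun ω => h (Y ω)) {ω | Z ω = 1}
      = ∫ ω, h (W₁ ω * Y₁ ω + (1 - W₁ ω) * Y₀ ω) ∂P :=
    condMean_eq_integral_of_eqOn_comp (s := {1})
      (f := fun v => h (v.2.2.2 * v.2.1 + (1 - v.2.2.2) * v.1)) hindep hZ hV (by fun_prop)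
      (measurableSet_singleton 1) hP₁pos.ne' fun ω (hω : Z ω = 1) => by simp [hY, hW, hω]
  have arm₀ : condMean P (fun ω => h (Y ω)) {ω | Z ω = 0}
      = ∫ ω, h (W₀ ω * Y₁ ω + (1 - W₀ ω) * Y₀ ω) ∂P :=
    condMean_eq_integral_of_eqOn_comp (s := {0})
      (f := fun v => h (v.2.2.1 * v.2.1 + (1 - v.2.2.1) * v.1)) hindep hZ hV (by fun_prop)
      (measurableSet_singleton 0) hP₀ fun ω (hω : Z ω = 0) => by simp [hY, hW, hω]
  have hmix₁ := integrable_comp_mix hW₁bin (hh.comp (by fun_prop)).aestronglyMeasurable hi₀ hi₁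
  have hmix₀ := integrable_comp_mix hW₀bin (hh.comp (by fun_prop)).aestronglyMeasurable hi₀ hi₁
  rw [arm₁, arm₀, ← integral_sub hmix₁ hmix₀, ← integral_indicator (measurableSet_lt hW₀ hW₁)]
  refine integral_congr_ae (hmono.mono fun ω hω => ?_)
  rw [Set.indicator_apply]
  exact apply_mix_sub_apply_mix h (hW₀bin ω) (hW₁bin ω) hω _ _

end InstrumentalVariables

/-- The intent-to-treat effect on the distributional outcome `1{Y ≤ y}` equals the complier
contribution `E[(1{Y1 ≤ y} − 1{Y0 ≤ y})·1_C]`. -/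
theorem itt_distributional_effect_equals_complier_contribution
    {Ω : Type*} [MeasurableSpace Ω] (P : Measure Ω) [IsProbabilityMeasure P]
    (Z W0 W1 Y0 Y1 : Ω → ℝ)
    (hZ : Measurable Z) (hW0 : Measurable W0) (hW1 : Measurable W1)
    (hY0 : Measurable Y0) (hY1 : Measurable Y1)
    (hZbin : ∀ ω, Z ω = 0 ∨ Z ω = 1)
    (hW0bin : ∀ ω, W0 ω = 0 ∨ W0 ω = 1)
    (hW1bin : ∀ ω, W1 ω = 0 ∨ W1 ω = 1)
    (W Y : Ω → ℝ)
    (hWdef : ∀ ω, W ω = Z ω * W1 ω + (1 - Z ω) * W0 ω)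
    (hYdef : ∀ ω, Y ω = W ω * Y1 ω + (1 - W ω) * Y0 ω)
    (hindep : IndepFun Z (fun ω => (Y0 ω, Y1 ω, W0 ω, W1 ω)) P)
    (hoverlap : 0 < P {ω | Z ω = 1} ∧ P {ω | Z ω = 1} < 1)
    (hmono : ∀ᵐ ω ∂P, W0 ω ≤ W1 ω) :
    ∀ y : ℝ,
      condMean P (fun ω => if Y ω ≤ y then (1 : ℝ) else 0) {ω | Z ω = 1}
        - condMean P (fun ω => if Y ω ≤ y then (1 : ℝ) else 0) {ω | Z ω = 0}
      = ∫ ω in {ω | W0 ω < W1 ω},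
          ((if Y1 ω ≤ y then (1 : ℝ) else 0) - (if Y0 ω ≤ y then (1 : ℝ) else 0)) ∂P := by
  intro y
  have hmeas : Measurable fun t : ℝ => if t ≤ y then (1 : ℝ) else 0 :=
    Measurable.ite measurableSet_Iic measurable_const measurable_const
  have hbdd : ∀ t : ℝ, ‖if t ≤ y then (1 : ℝ) else 0‖ ≤ 1 := fun t => by split_ifs <;> simp
  exact condMean_sub_condMean_eq_setIntegral_compliers hZ hW0 hW1 hY0 hY1 hmeas hZbin hW0bin
    hW1bin hWdef hYdef hindep hoverlap.1 hoverlap.2 hmono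
    (.of_bound (hmeas.comp hY0).aestronglyMeasurable 1 (ae_of_all _ fun ω => hbdd (Y0 ω)))
    (.of_bound (hmeas.comp hY1).aestronglyMeasurable 1 (ae_of_all _ fun ω => hbdd (Y1 ω)))
end

section
/- Assume additionally (Monotonicity) W1 ≥ W0 P-almost surely. Then the subdistribution of the treated potential outcome among compliers is identified: for every y ∈ ℝ, E[W·1{Y ≤ y} | Z = 1] − E[W·1{Y ≤ y} | Z = 0] = P({Y1 ≤ y} ∩ C). -/
/-!
On `{Z = 1}` the observed `W · 1{Y ≤ y}` coincides with `W1 · 1{Y1 ≤ y}`, and on `{Z = 0}` with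
`W0 · 1{Y1 ≤ y}`: when the realized treatment is `0` both sides vanish, and when it is `1` the
observed outcome is `Y1`. Both are functions of `(Y0, Y1, W0, W1)`, which is independent of `Z`,
so conditioning on either value of `Z` does not change their means. Under monotonicity
`W1 - W0` is the indicator of the compliers, so the difference of the two means is
`P({Y1 ≤ y} ∩ C)`.
-/

open MeasureTheory ProbabilityTheory

section Arithmetic

variable {w w0 w1 a b y : ℝ}

lemma mul_ite_select_le (hw : w = 0 ∨ w = 1) :
    (w * if w * a + (1 - w) * b ≤ y then 1 else 0) = w * if a ≤ y then 1 else 0 := by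
  rcases hw with rfl | rfl <;> norm_num

lemma mul_ite_sub_mul_ite_eq_ite_and_lt (hw0 : w0 = 0 ∨ w0 = 1) (hw1 : w1 = 0 ∨ w1 = 1)
    (hle : w0 ≤ w1) :
    ((w1 * if a ≤ y then 1 else 0) - w0 * if a ≤ y then 1 else 0)
      = if a ≤ y ∧ w0 < w1 then 1 else 0 := by
  rcases hw0 with rfl | rfl <;> rcases hw1 with rfl | rfl <;> norm_num at hle <;> simp

end Arithmetic

lemma Measurable.mul_ite_le {α : Type*} [MeasurableSpace α] {f g : α → ℝ}
    (hf : Measurable f) (hg : Measurable g) (y : ℝ) :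
    Measurable fun x => f x * if g x ≤ y then (1 : ℝ) else 0 :=
  hf.mul (Measurable.ite (measurableSet_le hg measurable_const) measurable_const measurable_const)

section Probability

variable {Ω : Type*} [MeasurableSpace Ω] {P : Measure Ω}

lemma integrable_mul_ite_le [IsFiniteMeasure P] {W X : Ω → ℝ} (hW : Measurable W)
    (hX : Measurable X) (hWbin : ∀ ω, W ω = 0 ∨ W ω = 1) (y : ℝ) :
    Integrable (fun ω => W ω * if X ω ≤ y then (1 : ℝ) else 0) P := by
  refine .of_bound (hW.mul_ite_le hX y).aestronglyMeasurable 1 (ae_of_all _ fun ω => ?_)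
  rcases hWbin ω with h | h <;> split_ifs <;> simp [h]

lemma condMean_preimage_eq_integral_of_indepFun [IsFiniteMeasure P]
    {α β : Type*} [MeasurableSpace α] [MeasurableSpace β] {Z : Ω → α} {V : Ω → β}
    (hZ : Measurable Z) (hV : AEMeasurable V P) (hindep : IndepFun Z V P)
    {s : Set α} (hs : MeasurableSet s) (hPs : P (Z ⁻¹' s) ≠ 0)
    {f : Ω → ℝ} {g : β → ℝ} (hg : AEStronglyMeasurable g (P.map V))
    (hfg : Set.EqOn f (fun ω => g (V ω)) (Z ⁻¹' s)) :
    condMean P f (Z ⁻¹' s) = ∫ ω, g (V ω) ∂P := by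
  have hPs' : (P (Z ⁻¹' s)).toReal ≠ 0 := ENNReal.toReal_ne_zero.2 ⟨hPs, measure_ne_top P _⟩
  rw [condMean, setIntegral_congr_fun (hZ hs) hfg,
    ((IndepFun_iff_Indep Z V P).1 hindep).setIntegral_eq_mul hZ.comap_le hV ⟨s, hs, rfl⟩ hg,
    measureReal_def, mul_div_cancel_left₀ _ hPs']

lemma measure_setOf_eq_zero_ne_zero [IsProbabilityMeasure P] {Z : Ω → ℝ} (hZ : Measurable Z)
    (hZbin : ∀ ω, Z ω = 0 ∨ Z ω = 1) (h : P {ω | Z ω = 1} < 1) : P {ω | Z ω = 0} ≠ 0 := by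
  have hcompl : {ω | Z ω = 0} = {ω | Z ω = 1}ᶜ := by
    ext ω; rcases hZbin ω with h | h <;> simp [h]
  rw [hcompl, Ne, prob_compl_eq_zero_iff (s := {ω | Z ω = 1}) (hZ (measurableSet_singleton 1))]
  exact h.ne

end Probability

/-- The subdistribution of the treated potential outcome among compliers is identified:
`E[W·1{Y ≤ y} | Z = 1] − E[W·1{Y ≤ y} | Z = 0] = P({Y1 ≤ y} ∩ C)`. -/
theorem treated_subdistribution_identified
    {Ω : Type*} [MeasurableSpace Ω] (P : Measure Ω) [IsProbabilityMeasure P]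
    (Z W0 W1 Y0 Y1 : Ω → ℝ)
    (hZ : Measurable Z) (hW0 : Measurable W0) (hW1 : Measurable W1)
    (hY0 : Measurable Y0) (hY1 : Measurable Y1)
    (hZbin : ∀ ω, Z ω = 0 ∨ Z ω = 1)
    (hW0bin : ∀ ω, W0 ω = 0 ∨ W0 ω = 1)
    (hW1bin : ∀ ω, W1 ω = 0 ∨ W1 ω = 1)
    (W Y : Ω → ℝ)
    (hWdef : ∀ ω, W ω = Z ω * W1 ω + (1 - Z ω) * W0 ω)
    (hYdef : ∀ ω, Y ω = W ω * Y1 ω + (1 - W ω) * Y0 ω)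
    (hindep : IndepFun Z (fun ω => (Y0 ω, Y1 ω, W0 ω, W1 ω)) P)
    (hoverlap : 0 < P {ω | Z ω = 1} ∧ P {ω | Z ω = 1} < 1)
    (hmono : ∀ᵐ ω ∂P, W0 ω ≤ W1 ω) :
    ∀ y : ℝ,
      condMean P (fun ω => W ω * (if Y ω ≤ y then (1 : ℝ) else 0)) {ω | Z ω = 1}
        - condMean P (fun ω => W ω * (if Y ω ≤ y then (1 : ℝ) else 0)) {ω | Z ω = 0}
      = (P ({ω | Y1 ω ≤ y} ∩ {ω | W0 ω < W1 ω})).toReal := by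
  intro y
  have hV : Measurable fun ω => (Y0 ω, Y1 ω, W0 ω, W1 ω) := by fun_prop
  have hg : ∀ w : ℝ × ℝ × ℝ × ℝ → ℝ, Measurable w →
      Measurable fun p : ℝ × ℝ × ℝ × ℝ => w p * if p.2.1 ≤ y then (1 : ℝ) else 0 :=
    fun w hw => hw.mul_ite_le (by fun_prop) y
  have arm1 : condMean P (fun ω => W ω * if Y ω ≤ y then (1 : ℝ) else 0) {ω | Z ω = 1}
      = ∫ ω, W1 ω * (if Y1 ω ≤ y then (1 : ℝ) else 0) ∂P :=
    condMean_preimage_eq_integral_of_indepFun hZ hV.aemeasurable hindep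
      (measurableSet_singleton 1) hoverlap.1.ne'
      (hg (·.2.2.2) (by fun_prop)).aestronglyMeasurable
      fun ω (hω : Z ω = 1) => by
        rw [hYdef ω, show W ω = W1 ω by rw [hWdef, hω]; ring]
        exact mul_ite_select_le (hW1bin ω)
  have arm0 : condMean P (fun ω => W ω * if Y ω ≤ y then (1 : ℝ) else 0) {ω | Z ω = 0}
      = ∫ ω, W0 ω * (if Y1 ω ≤ y then (1 : ℝ) else 0) ∂P :=
    condMean_preimage_eq_integral_of_indepFun hZ hV.aemeasurable hindep
      (measurableSet_singleton 0) (measure_setOf_eq_zero_ne_zero hZ hZbin hoverlap.2)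
      (hg (·.2.2.1) (by fun_prop)).aestronglyMeasurable
      fun ω (hω : Z ω = 0) => by
        rw [hYdef ω, show W ω = W0 ω by rw [hWdef, hω]; ring]
        exact mul_ite_select_le (hW0bin ω)
  rw [arm1, arm0, ← integral_sub (integrable_mul_ite_le hW1 hY1 hW1bin y)
    (integrable_mul_ite_le hW0 hY1 hW0bin y), ← measureReal_def, ← integral_indicator_one
    ((measurableSet_le hY1 measurable_const).inter (measurableSet_lt hW0 hW1))]
  refine integral_congr_ae (hmono.mono fun ω hle => ?_)
  simp only [Set.indicator_apply, Set.mem_inter_iff, Set.mem_ofPred_eq, Pi.one_apply]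
  exact mul_ite_sub_mul_ite_eq_ite_and_lt (hW0bin ω) (hW1bin ω) hle
end
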